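/- For every positive integer n, every permutation π ∈ S_n has a weak-twin of size at least ⌊n/5⌋; in particular F^weak(n) ≥ ⌊n/5⌋ (improving the previously known bound n/12 − O(1)). -/
import Mathlib


/-- `I, J` form a weak twin of the permutation `π`: they are disjoint, of the same size,
and the sign sequences of `π` restricted to `I` and to `J` coincide. -/
def IsWeakTwin {n : ℕ} (π : Equiv.Perm (Fin n)) (I J : Finset (Fin n)) : Prop :=
  Disjoint I J ∧ I.card = J.card ∧
    ∀ (t : ℕ) (hI : t + 1 < I.card) (hJ : t + 1 < J.card),
      (π (I.orderEmbOfFin rfl ⟨t, Nat.lt_of_succ_lt hI⟩) < π (I.orderEmbOfFin rfl ⟨t + 1, hI⟩) ↔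
       π (J.orderEmbOfFin rfl ⟨t, Nat.lt_of_succ_lt hJ⟩) < π (J.orderEmbOfFin rfl ⟨t + 1, hJ⟩))

/-- `f^weak(π)`: the maximum size of a weak twin of `π`. -/
noncomputable def maxWeakTwinSize {n : ℕ} (π : Equiv.Perm (Fin n)) : ℕ :=
  sSup {ℓ : ℕ | ∃ I J : Finset (Fin n), IsWeakTwin π I J ∧ I.card = ℓ}

/-- `F^weak(n)`: the minimum of `f^weak(π)` over all `π ∈ S_n`. -/
noncomputable def Fweak (n : ℕ) : ℕ :=
  sInf {m : ℕ | ∃ π : Equiv.Perm (Fin n), maxWeakTwinSize π = m}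

namespace WeakTwinAux

variable {n : ℕ}

def InBlock (n : ℕ) (i : ℕ) (p : Fin n) : Prop := 5 * i ≤ (p : ℕ) ∧ (p : ℕ) < 5 * i + 5

lemma inBlock_eq {i j : ℕ} {p : Fin n} (hi : InBlock n i p) (hj : InBlock n j p) : i = j := by
  rcases hi with ⟨h1, h2⟩; rcases hj with ⟨h3, h4⟩; omega

lemma sort3 (π : Equiv.Perm (Fin n)) {P : Fin n → Prop} {x y z : Fin n}
    (hx : P x) (hy : P y) (hz : P z)
    (hxy : x ≠ y) (hxz : x ≠ z) (hyz : y ≠ z) :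
    ∃ u1 u2 u3 : Fin n, P u1 ∧ P u2 ∧ P u3 ∧ π u1 < π u2 ∧ π u2 < π u3 := by
  have h1 : π x ≠ π y := fun h => hxy (π.injective h)
  have h2 : π x ≠ π z := fun h => hxz (π.injective h)
  have h3 : π y ≠ π z := fun h => hyz (π.injective h)
  rcases h1.lt_or_gt with a | a <;> rcases h2.lt_or_gt with b | b <;>
    rcases h3.lt_or_gt with c | c
  · exact ⟨x, y, z, hx, hy, hz, a, c⟩
  · exact ⟨x, z, y, hx, hz, hy, b, c⟩
  · exact absurd (a.trans c) (not_lt.2 b.le)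
  · exact ⟨z, x, y, hz, hx, hy, b, a⟩
  · exact ⟨y, x, z, hy, hx, hz, a, b⟩
  · exact absurd (c.trans a) (not_lt.2 b.le)
  · exact ⟨y, z, x, hy, hz, hx, c, b⟩
  · exact ⟨z, y, x, hz, hy, hx, c, a⟩

lemma exists_side_triple (π : Equiv.Perm (Fin n)) (i : ℕ) (h5 : 5 * i + 5 ≤ n) (w : Fin n)
    (hw : ∀ p : Fin n, InBlock n i p → π p ≠ w) :
    ∃ u1 u2 u3 : Fin n, InBlock n i u1 ∧ InBlock n i u2 ∧ InBlock n i u3 ∧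
      π u1 < π u2 ∧ π u2 < π u3 ∧ (w < π u1 ∨ π u3 < w) := by
  set p : Fin 5 → Fin n := fun j => ⟨5 * i + (j : ℕ), by have := j.isLt; omega⟩ with hp
  have hblock : ∀ j, InBlock n i (p j) := by
    intro j
    refine ⟨by simp [hp], ?_⟩
    have := j.isLt
    simp only [hp]
    omega
  have hpinj : ∀ {j j' : Fin 5}, j ≠ j' → p j ≠ p j' := by
    intro j j' hne h
    apply hne
    have : 5 * i + (j : ℕ) = 5 * i + (j' : ℕ) := congrArg Fin.val h
    exact Fin.ext (by omega)
  have hcard : ((Finset.univ : Finset (Fin 5)).filter (fun j => w < π (p j))).card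
      + ((Finset.univ : Finset (Fin 5)).filter (fun j => ¬ w < π (p j))).card = 5 := by
    rw [Finset.card_filter_add_card_filter_not]; simp
  rcases lt_or_ge 2 ((Finset.univ : Finset (Fin 5)).filter (fun j => w < π (p j))).card with h | h
  · obtain ⟨j1, j2, j3, m1, m2, m3, ne12, ne13, ne23⟩ := Finset.two_lt_card_iff.1 h
    obtain ⟨u1, u2, u3, q1, q2, q3, l12, l23⟩ :=
      sort3 π (P := fun u => InBlock n i u ∧ w < π u)
        ⟨hblock j1, (Finset.mem_filter.1 m1).2⟩ ⟨hblock j2, (Finset.mem_filter.1 m2).2⟩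
        ⟨hblock j3, (Finset.mem_filter.1 m3).2⟩ (hpinj ne12) (hpinj ne13) (hpinj ne23)
    exact ⟨u1, u2, u3, q1.1, q2.1, q3.1, l12, l23, Or.inl q1.2⟩
  · have h' : 2 < ((Finset.univ : Finset (Fin 5)).filter (fun j => ¬ w < π (p j))).card := by omega
    obtain ⟨j1, j2, j3, m1, m2, m3, ne12, ne13, ne23⟩ := Finset.two_lt_card_iff.1 h'
    have glt : ∀ {j : Fin 5}, ¬ w < π (p j) → π (p j) < w := fun {j} hj =>
      lt_of_le_of_ne (not_lt.1 hj) (hw (p j) (hblock j))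
    obtain ⟨u1, u2, u3, q1, q2, q3, l12, l23⟩ :=
      sort3 π (P := fun u => InBlock n i u ∧ π u < w)
        ⟨hblock j1, glt (Finset.mem_filter.1 m1).2⟩ ⟨hblock j2, glt (Finset.mem_filter.1 m2).2⟩
        ⟨hblock j3, glt (Finset.mem_filter.1 m3).2⟩ (hpinj ne12) (hpinj ne13) (hpinj ne23)
    exact ⟨u1, u2, u3, q1.1, q2.1, q3.1, l12, l23, Or.inr q3.2⟩

/-- extend a block-membership family by one block -/
lemma ext_mem {x : ℕ → Fin n} {u : Fin n} {k : ℕ}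
    (hx : ∀ i ≤ k, InBlock n i (x i)) (hu : InBlock n (k + 1) u) :
    ∀ i ≤ k + 1, InBlock n i (if i = k + 1 then u else x i) := by
  intro i hi
  by_cases h : i = k + 1
  · subst h; simpa using hu
  · simp only [if_neg h]; exact hx i (by omega)

lemma ext_ne {x y : ℕ → Fin n} {u v : Fin n} {k : ℕ}
    (hxy : ∀ i ≤ k, x i ≠ y i) (huv : u ≠ v) :
    ∀ i ≤ k + 1, (if i = k + 1 then u else x i) ≠ (if i = k + 1 then v else y i) := by
  intro i hi
  by_cases h : i = k + 1
  · simpa [h] using huv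
  · simp only [if_neg h]; exact hxy i (by omega)

lemma ext_cons (π : Equiv.Perm (Fin n)) {x y : ℕ → Fin n} {u v : Fin n} {k : ℕ}
    (hc : ∀ i < k, (π (x i) < π (x (i + 1)) ↔ π (y i) < π (y (i + 1))))
    (hj : (π (x k) < π u ↔ π (y k) < π v)) :
    ∀ i < k + 1,
      (π (if i = k + 1 then u else x i) < π (if i + 1 = k + 1 then u else x (i + 1)) ↔
       π (if i = k + 1 then v else y i) < π (if i + 1 = k + 1 then v else y (i + 1))) := by
  intro i hi
  by_cases h : i = k
  · simp only [h, if_neg (by omega : ¬ k = k + 1), if_pos rfl]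
    exact hj
  · simp only [if_neg (by omega : ¬ i = k + 1), if_neg (by omega : ¬ i + 1 = k + 1)]
    exact hc i (by omega)

lemma chain (π : Equiv.Perm (Fin n)) (m : ℕ) (h5 : 5 * m ≤ n) :
    ∀ k, k < m → ∃ a b c d : ℕ → Fin n,
      (∀ i ≤ k, InBlock n i (a i)) ∧ (∀ i ≤ k, InBlock n i (b i)) ∧
      (∀ i ≤ k, InBlock n i (c i)) ∧ (∀ i ≤ k, InBlock n i (d i)) ∧
      (∀ i ≤ k, a i ≠ b i) ∧ (∀ i ≤ k, c i ≠ d i) ∧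
      (∀ i < k, (π (a i) < π (a (i + 1)) ↔ π (b i) < π (b (i + 1)))) ∧
      (∀ i < k, (π (c i) < π (c (i + 1)) ↔ π (d i) < π (d (i + 1)))) ∧
      b k = d k ∧ π (a k) < π (b k) ∧ π (d k) < π (c k) := by
  intro k
  induction k with
  | zero =>
    intro hk
    have h2 : 2 < n := by omega
    have h1 : 1 < n := by omega
    have h0 : 0 < n := by omega
    obtain ⟨u1, u2, u3, q1, q2, q3, l12, l23⟩ :=
      sort3 π (P := fun u => InBlock n 0 u)
        (x := ⟨0, h0⟩) (y := ⟨1, h1⟩) (z := ⟨2, h2⟩)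
        (by constructor <;> simp) (by constructor <;> simp) (by constructor <;> simp)
        (by simp [Fin.ext_iff]) (by simp [Fin.ext_iff]) (by simp [Fin.ext_iff])
    refine ⟨fun _ => u1, fun _ => u2, fun _ => u3, fun _ => u2, ?_, ?_, ?_, ?_, ?_, ?_,
      fun i hi => absurd hi (by omega), fun i hi => absurd hi (by omega), rfl, l12, l23⟩ <;>
      intro i hi
    · interval_cases i; exact q1
    · interval_cases i; exact q2
    · interval_cases i; exact q3
    · interval_cases i; exact q2
    · exact fun h => absurd (congrArg π h) (ne_of_lt l12)
    · exact fun h => absurd (congrArg π h) (ne_of_gt l23)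
  | succ k ih =>
    intro hk
    obtain ⟨a, b, c, d, ha, hb, hc, hd, hab, hcd, consAB, consCD, hbd, hlt1, hlt2⟩ :=
      ih (by omega)
    have h5n : 5 * (k + 1) + 5 ≤ n := by omega
    have hw : ∀ p : Fin n, InBlock n (k + 1) p → π p ≠ π (b k) := by
      intro p hp h
      have hpb : p = b k := π.injective h
      subst hpb
      have := inBlock_eq hp (hb k le_rfl)
      omega
    obtain ⟨u1, u2, u3, q1, q2, q3, l12, l23, hside⟩ :=
      exists_side_triple π (k + 1) h5n (π (b k)) hw
    have hne12 : u1 ≠ u2 := fun h => absurd (congrArg π h) (ne_of_lt l12)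
    have hne32 : u3 ≠ u2 := fun h => absurd (congrArg π h) (ne_of_gt l23)
    rcases hside with hup | hdown
    · -- all values above π (b k) : extend the (a, b) chain in both slots
      refine ⟨fun i => if i = k + 1 then u1 else a i,
              fun i => if i = k + 1 then u2 else b i,
              fun i => if i = k + 1 then u3 else a i,
              fun i => if i = k + 1 then u2 else b i,
              ext_mem ha q1, ext_mem hb q2, ext_mem ha q3, ext_mem hb q2,
              ext_ne hab hne12, ext_ne hab hne32,
              ext_cons π consAB (iff_of_true (hlt1.trans hup) (hup.trans l12)),
              ext_cons π consAB
                (iff_of_true (hlt1.trans (hup.trans (l12.trans l23))) (hup.trans l12)),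
              by simp, by simpa using l12, by simpa using l23⟩
    · -- all values below π (b k) = π (d k) : extend the (c, d) chain in both slots
      have hdval : π u3 < π (d k) := by rw [hbd] at hdown; exact hdown
      have hB : π u2 < π (d k) := l23.trans hdval
      have hA : π u1 < π (c k) := (l12.trans hB).trans hlt2
      refine ⟨fun i => if i = k + 1 then u1 else c i,
              fun i => if i = k + 1 then u2 else d i,
              fun i => if i = k + 1 then u3 else c i,
              fun i => if i = k + 1 then u2 else d i,
              ext_mem hc q1, ext_mem hd q2, ext_mem hc q3, ext_mem hd q2,
              ext_ne hcd hne12, ext_ne hcd hne32,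
              ext_cons π consCD (iff_of_false (not_lt.2 hA.le) (not_lt.2 hB.le)),
              ext_cons π consCD
                (iff_of_false (not_lt.2 (hdval.trans hlt2).le) (not_lt.2 hB.le)),
              by simp, by simpa using l12, by simpa using l23⟩



lemma exists_weakTwin (π : Equiv.Perm (Fin n)) :
    ∃ I J : Finset (Fin n), IsWeakTwin π I J ∧ n / 5 ≤ I.card := by
  rcases Nat.eq_zero_or_pos (n / 5) with h0 | hpos
  · refine ⟨∅, ∅, ⟨Finset.disjoint_left.2 (by simp), rfl, ?_⟩, by simp [h0]⟩
    intro t hI hJ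
    exact absurd hI (by simp)
  · set m := n / 5 with hm
    have h5 : 5 * m ≤ n := by
      have := Nat.div_mul_le_self n 5
      omega
    obtain ⟨a, b, c, d, ha0, hb0, _, _, hab, _, consAB, _, _, _, _⟩ :=
      WeakTwinAux.chain π m h5 (m - 1) (by omega)
    have ha : ∀ i < m, InBlock n i (a i) := fun i hi => ha0 i (by omega)
    have hb : ∀ i < m, InBlock n i (b i) := fun i hi => hb0 i (by omega)
    set I : Finset (Fin n) := (Finset.range m).image a with hI
    set J : Finset (Fin n) := (Finset.range m).image b with hJ
    have hIcard : I.card = m := by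
      rw [hI, Finset.card_image_of_injOn, Finset.card_range]
      intro i hi j hj hij
      simp only [Finset.coe_range, Set.mem_Iio] at hi hj
      exact inBlock_eq (ha i hi) (by rw [hij]; exact ha j hj)
    have hJcard : J.card = m := by
      rw [hJ, Finset.card_image_of_injOn, Finset.card_range]
      intro i hi j hj hij
      simp only [Finset.coe_range, Set.mem_Iio] at hi hj
      exact inBlock_eq (hb i hi) (by rw [hij]; exact hb j hj)
    have hmono : ∀ (N : ℕ), N = m → ∀ (x : ℕ → Fin n), (∀ i < m, InBlock n i (x i)) →
        StrictMono (fun t : Fin N => x (t : ℕ)) := by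
      intro N hN x hx t t' h
      have ht : (t : ℕ) < m := by have := t.isLt; omega
      have ht' : (t' : ℕ) < m := by have := t'.isLt; omega

      have e1 := hx _ ht
      have e2 := hx _ ht'
      have hlt : (t : ℕ) < (t' : ℕ) := h
      rcases e1 with ⟨_, e1b⟩
      rcases e2 with ⟨e2a, _⟩
      show x (t : ℕ) < x (t' : ℕ)
      exact Fin.lt_def.2 (by omega)
    set f : Fin I.card ↪o Fin n :=
      OrderEmbedding.ofStrictMono (fun t : Fin I.card => a (t : ℕ)) (hmono _ hIcard a ha) with hf
    set g : Fin J.card ↪o Fin n :=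
      OrderEmbedding.ofStrictMono (fun t : Fin J.card => b (t : ℕ)) (hmono _ hJcard b hb) with hg
    have hfeq : f = I.orderEmbOfFin rfl := by
      refine Finset.orderEmbOfFin_unique' rfl ?_
      intro t
      exact Finset.mem_image.2 ⟨(t : ℕ), Finset.mem_range.2 (by have := t.isLt; omega), rfl⟩
    have hgeq : g = J.orderEmbOfFin rfl := by
      refine Finset.orderEmbOfFin_unique' rfl ?_
      intro t
      exact Finset.mem_image.2 ⟨(t : ℕ), Finset.mem_range.2 (by have := t.isLt; omega), rfl⟩
    refine ⟨I, J, ⟨?_, by omega, ?_⟩, by omega⟩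
    · rw [Finset.disjoint_left]
      rintro x hxI hxJ
      obtain ⟨i, hi, rfl⟩ := Finset.mem_image.1 hxI
      obtain ⟨j, hj, hba⟩ := Finset.mem_image.1 hxJ
      rw [Finset.mem_range] at hi hj
      have hij : j = i := inBlock_eq (hb j hj) (by rw [hba]; exact ha i hi)
      subst hij
      exact hab j (by omega) hba.symm
    · intro t htI htJ
      rw [← hfeq, ← hgeq]
      have ht : t < m - 1 := by omega
      exact consAB t ht

end WeakTwinAux

/-- Every permutation `π ∈ S_n` has a weak twin of size at least `⌊n / 5⌋`;
in particular `F^weak(n) ≥ ⌊n / 5⌋`. -/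
theorem weakTwin_lower_bound_five (n : ℕ) (hn : 1 ≤ n) :
    (∀ π : Equiv.Perm (Fin n),
      ∃ I J : Finset (Fin n), IsWeakTwin π I J ∧ n / 5 ≤ I.card) ∧
    n / 5 ≤ Fweak n := by
  refine ⟨fun π => WeakTwinAux.exists_weakTwin π, ?_⟩
  apply le_csInf
  · exact ⟨maxWeakTwinSize (1 : Equiv.Perm (Fin n)), 1, rfl⟩
  · rintro x ⟨π, rfl⟩
    obtain ⟨I, J, hT, hle⟩ := WeakTwinAux.exists_weakTwin π
    refine hle.trans (le_csSup ⟨n, ?_⟩ ⟨I, J, hT, rfl⟩)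
    rintro ℓ ⟨I', J', _, rfl⟩
    calc I'.card ≤ (Finset.univ : Finset (Fin n)).card := Finset.card_le_univ _
      _ = n := by simp
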